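/- Let G be a finite abelian group of odd order and F a field. Suppose g ∈ Hom_{Ω_F}(ℤ[G(-1)], (F^c)^×) and let f = Θ*^t(g) = g ∘ Θ* ∈ Hom(A_Ĝ, (F^c)^×), viewed as an element r_G(a)·G of (F^c[G])^×/G. Then any lift x ∈ (F^c[G])^× of f satisfies x · x^{[-1]} = 1, where [-1] is the involution induced by inversion on G. -/

import Mathlib

/-- The involution of `C[G]` induced by `s ↦ s⁻¹` on `G`. -/
noncomputable def groupAlgebraInv {G : Type*} [Group G] {C : Type*} [Field C]
    (x : MonoidAlgebra C G) : MonoidAlgebra C G :=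
  MonoidAlgebra.ofCoeff (Finsupp.mapDomain (fun s : G => s⁻¹) x.coeff)

/-!
For a character `χ`, the element `χ + χ⁻¹` lies in `A_Ĝ`, and its Stickelberger image
`⟨χ, s⟩_* + ⟨χ⁻¹, s⟩_*` vanishes: the exponents `υ χ s` are the representatives of `χ s` in the
symmetric interval `(-n/2, n/2)`, so `υ χ⁻¹ s = -υ χ s`. The lift condition at `χ + χ⁻¹` therefore
reads `x(χ) x(χ⁻¹) = 1`. Since `x^{[-1]}(χ) = x(χ⁻¹)`, every character takes the value `1` on
`x x^{[-1]}`, and characters separate the points of `C[G]` by Fourier inversion.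
-/

section CharacterEvaluation

variable {G C : Type*} [Group G] [Field C]

lemma groupAlgebraInv_coeff (y : MonoidAlgebra C G) (s : G) :
    (groupAlgebraInv y).coeff s = y.coeff s⁻¹ := by
  conv_lhs => rw [← inv_inv s]
  exact Finsupp.mapDomain_apply inv_injective y.coeff s⁻¹

noncomputable def charEval (χ : G →* Cˣ) : MonoidAlgebra C G →ₐ[C] C :=
  MonoidAlgebra.lift C C G ((Units.coeHom C).comp χ)

variable [Fintype G]

lemma charEval_apply (χ : G →* Cˣ) (y : MonoidAlgebra C G) :
    charEval χ y = ∑ s : G, y.coeff s * χ s := by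
  rw [charEval, MonoidAlgebra.lift_apply, Finsupp.sum_fintype _ _ (by simp)]
  simp [smul_eq_mul]

lemma charEval_groupAlgebraInv (χ : G →* Cˣ) (y : MonoidAlgebra C G) :
    charEval χ (groupAlgebraInv y) = charEval χ⁻¹ y := by
  simp only [charEval_apply, groupAlgebraInv_coeff]
  exact Fintype.sum_equiv (Equiv.inv G) _ _ fun s => by simp

end CharacterEvaluation

section Orthogonality

variable {G C : Type*} [CommGroup G] [Finite G] [CommRing C] [IsDomain C]
  [HasEnoughRootsOfUnity C (Monoid.exponent G)] [Fintype (G →* Cˣ)]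

lemma sum_monoidHom_apply_eq_zero {u : G} (hu : u ≠ 1) : ∑ χ : G →* Cˣ, (χ u : C) = 0 := by
  obtain ⟨χ₀, hχ₀⟩ := CommGroup.exists_apply_ne_one_of_hasEnoughRootsOfUnity G C hu
  refine eq_zero_of_mul_eq_self_left (fun h => hχ₀ (Units.ext h)) ?_
  rw [Finset.mul_sum]
  exact Fintype.sum_equiv (Equiv.mulLeft χ₀) _ _ fun χ => rfl

lemma sum_monoidHom_apply [DecidableEq G] (u : G) :
    ∑ χ : G →* Cˣ, (χ u : C) = if u = 1 then (Fintype.card (G →* Cˣ) : C) else 0 := by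
  split_ifs with hu
  · simp [hu]
  · exact sum_monoidHom_apply_eq_zero hu

end Orthogonality

theorem charEval_injective {G C : Type*} [CommGroup G] [Fintype G] [Field C] [CharZero C]
    [HasEnoughRootsOfUnity C (Monoid.exponent G)] [Fintype (G →* Cˣ)]
    {y z : MonoidAlgebra C G} (h : ∀ χ : G →* Cˣ, charEval χ y = charEval χ z) : y = z := by
  suffices ∀ w : MonoidAlgebra C G, (∀ χ : G →* Cˣ, charEval χ w = 0) → w = 0 from
    sub_eq_zero.mp (this _ fun χ => by rw [map_sub, h, sub_self])
  classical
  intro w hw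
  ext t
  have hinversion : ∑ χ : G →* Cˣ, (χ t⁻¹ : C) * charEval χ w =
      w.coeff t * Fintype.card (G →* Cˣ) := by
    simp_rw [charEval_apply, Finset.mul_sum, mul_left_comm _ (w.coeff _), ← Units.val_mul,
      ← map_mul]
    rw [Finset.sum_comm]
    simp_rw [← Finset.mul_sum, sum_monoidHom_apply, inv_mul_eq_one, mul_ite, mul_zero]
    rw [Finset.sum_ite_eq Finset.univ t, if_pos (Finset.mem_univ t)]
  simpa [hw] using hinversion.symm

lemma IsPrimitiveRoot.add_eq_zero_of_zpow_mul_zpow_eq_one {M : Type*} [CommGroup M] {ζ : M}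
    {n : ℕ} (hζ : IsPrimitiveRoot ζ n) {a b : ℤ}
    (ha : 1 - (n : ℤ) ≤ 2 * a ∧ 2 * a ≤ (n : ℤ) - 1)
    (hb : 1 - (n : ℤ) ≤ 2 * b ∧ 2 * b ≤ (n : ℤ) - 1) (h : ζ ^ a * ζ ^ b = 1) : a + b = 0 := by
  rw [← zpow_add] at h
  refine Int.eq_zero_of_abs_lt_dvd ((hζ.zpow_eq_one_iff_dvd _).mp h) ?_
  rw [abs_lt]
  omega

section SumOfTwoSingles

variable {ι : Type*} [Fintype ι] [DecidableEq ι]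

lemma prod_zpow_single_add_single {M : Type*} [DivisionCommMonoid M] (f : ι → M) (a b : ι) :
    ∏ i, f i ^ ((Pi.single a 1 + Pi.single b 1 : ι → ℤ) i) = f a * f b := by
  have hsplit : ∀ i, f i ^ ((Pi.single a 1 + Pi.single b 1 : ι → ℤ) i) =
      (if i = a then f i else 1) * (if i = b then f i else 1) := by
    intro i
    by_cases hia : i = a <;> by_cases hib : i = b <;> subst_vars <;> simp [sq, *]
  rw [Finset.prod_congr rfl fun i _ => hsplit i, Finset.prod_mul_distrib, Finset.prod_ite_eq',
    Finset.prod_ite_eq', if_pos (Finset.mem_univ a), if_pos (Finset.mem_univ b)]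

lemma sum_single_add_single_mul {R : Type*} [Ring R] (u : ι → R) (a b : ι) :
    ∑ i, ((Pi.single a 1 + Pi.single b 1 : ι → ℤ) i : R) * u i = u a + u b := by
  simp [Pi.single_apply, add_mul, Finset.sum_add_distrib]

end SumOfTwoSingles

theorem stmt11_general (G : Type*) [CommGroup G] [Fintype G]
    (C : Type*) [Field C] [IsAlgClosed C] [CharZero C] [Fintype (G →* Cˣ)]
    (ζ : ℕ → Cˣ) (hζ : ∀ n : ℕ, 0 < n → IsPrimitiveRoot (ζ n) n)
    (υ : (G →* Cˣ) → G → ℤ)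
    (hυ1 : ∀ (χ : G →* Cˣ) (s : G),
      (1 - (orderOf s : ℤ)) ≤ 2 * υ χ s ∧ 2 * υ χ s ≤ (orderOf s : ℤ) - 1)
    (hυ2 : ∀ (χ : G →* Cˣ) (s : G), χ s = ζ (orderOf s) ^ (υ χ s))
    (g : G → Cˣ) (x : (MonoidAlgebra C G)ˣ)
    (hlift : ∀ ψ : (G →* Cˣ) → ℤ,
      (∀ s : G, ∏ χ : G →* Cˣ, (χ s) ^ (ψ χ) = 1) →
      ∀ m : G → ℤ,
        (∀ s : G, (m s : ℚ) * (orderOf s : ℚ) = ∑ χ : G →* Cˣ, (ψ χ : ℚ) * (υ χ s : ℚ)) →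
        ∏ χ : G →* Cˣ, (∑ s : G, (x : MonoidAlgebra C G).coeff s * (χ s : C)) ^ (ψ χ) =
          ∏ s : G, ((g s : Cˣ) : C) ^ (m s)) :
    (x : MonoidAlgebra C G) * groupAlgebraInv (x : MonoidAlgebra C G) = 1 := by
  classical
  have hυ_inv : ∀ χ s, υ χ⁻¹ s + υ χ s = 0 := fun χ s =>
    (hζ _ (orderOf_pos s)).add_eq_zero_of_zpow_mul_zpow_eq_one (hυ1 χ⁻¹ s) (hυ1 χ s) <| by
      rw [← hυ2, ← hυ2, MonoidHom.inv_apply, inv_mul_cancel]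
  have hunit : ∀ χ : G →* Cˣ, charEval χ (x : MonoidAlgebra C G) * charEval χ⁻¹ x = 1 := by
    intro χ
    have h := hlift (Pi.single χ 1 + Pi.single χ⁻¹ 1)
      (fun s => by rw [prod_zpow_single_add_single, MonoidHom.inv_apply, mul_inv_cancel]) 0
      (fun s => by
        rw [sum_single_add_single_mul, ← Int.cast_add, add_comm, hυ_inv]
        simp)
    rw [prod_zpow_single_add_single] at h
    simp only [Pi.zero_apply, zpow_zero, Finset.prod_const_one] at h
    simpa only [charEval_apply] using h
  refine charEval_injective fun χ => ?_
  rw [map_mul, charEval_groupAlgebraInv, hunit, map_one]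

/-- Let `G` be a finite abelian group of odd order and `C` an algebraically
closed field of characteristic `0`.  Suppose `g : G → Cˣ` (an element of
`Hom(ℤ[G(-1)], Cˣ)`) and let `x ∈ (C[G])ˣ` be any lift of the transposed Stickelberger value
`Θ*ᵗ(g) = g ∘ Θ* ∈ Hom(A_Ĝ, Cˣ)`; concretely, for every `ψ ∈ A_Ĝ` (i.e. `Π χ^{ψ(χ)} = 1`)
with Stickelberger coefficients `m s = ⟨ψ, s⟩_* ∈ ℤ`, the character evaluations of `x` satisfy
`Π_χ x(χ)^{ψ(χ)} = Π_s g(s)^{m s}`.  Then `x · x^{[-1]} = 1`, where `[-1]` is induced by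
inversion on `G`. -/
theorem stmt11 (G : Type*) [CommGroup G] [Fintype G]
    (hodd : Odd (Fintype.card G))
    (C : Type*) [Field C] [IsAlgClosed C] [CharZero C] [Fintype (G →* Cˣ)]
    (ζ : ℕ → Cˣ) (hζ : ∀ n : ℕ, 0 < n → IsPrimitiveRoot (ζ n) n)
    (υ : (G →* Cˣ) → G → ℤ)
    (hυ1 : ∀ (χ : G →* Cˣ) (s : G),
      (1 - (orderOf s : ℤ)) ≤ 2 * υ χ s ∧ 2 * υ χ s ≤ (orderOf s : ℤ) - 1)
    (hυ2 : ∀ (χ : G →* Cˣ) (s : G), χ s = ζ (orderOf s) ^ (υ χ s))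
    (g : G → Cˣ) (x : (MonoidAlgebra C G)ˣ)
    (hlift : ∀ ψ : (G →* Cˣ) → ℤ,
      (∀ s : G, ∏ χ : G →* Cˣ, (χ s) ^ (ψ χ) = 1) →
      ∀ m : G → ℤ,
        (∀ s : G, (m s : ℚ) * (orderOf s : ℚ) = ∑ χ : G →* Cˣ, (ψ χ : ℚ) * (υ χ s : ℚ)) →
        ∏ χ : G →* Cˣ, (∑ s : G, (x : MonoidAlgebra C G).coeff s * (χ s : C)) ^ (ψ χ) =
          ∏ s : G, ((g s : Cˣ) : C) ^ (m s)) :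
    (x : MonoidAlgebra C G) * groupAlgebraInv (x : MonoidAlgebra C G) = 1 :=
  stmt11_general G C ζ hζ υ hυ1 hυ2 g x hlift
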